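/- Let D be an integral domain. Then D is a v-domain if and only if for all nonzero a, b ∈ D, (((a) :_D (b)) + ((b) :_D (a)))^v = D, where ((a) :_D (b)) := {x ∈ D | xb ∈ aD}. -/

import Mathlib

open FractionalIdeal

variable {D K : Type*} [CommRing D] [IsDomain D] [Field K] [Algebra D K] [IsFractionRing D K]

/-- The `v`-operation: `A ↦ (A⁻¹)⁻¹`, where `A⁻¹ = (D : A) = 1 / A`. -/
noncomputable def vop (A : FractionalIdeal (nonZeroDivisors D) K) :
    FractionalIdeal (nonZeroDivisors D) K := 1 / (1 / A)

/-- `A` is `v`-invertible if `(A·A⁻¹)^v = D`. -/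
noncomputable def IsVInvertible (A : FractionalIdeal (nonZeroDivisors D) K) : Prop :=
  vop (A * (1 / A)) = 1

/-!
For `F = (a, b)` one has `a·F⁻¹ = (a) :_D (b)`, so `F·F⁻¹` is the sum of the two colon
ideals, and the condition says precisely that two-generated ideals are `v`-invertible.
Conversely, `v`-invertibility is closed under products and passes to factors, because
`(A·B^v)^v = (A·B)^v`. In any idempotent commutative semiring, with `A = ∑ Aᵢ`, the element
`A + C` divides `A·∏ (Aᵢ + C)`; for `A = (x₁, …, xₙ)` and `C = (c)` this exhibits
`(x₁, …, xₙ, c)` as a factor of a product of ideals with fewer generators, so induction on the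
number of generators shows that every nonzero finitely generated ideal is `v`-invertible.
Fractional ideals reduce to integral ones by clearing a denominator.
-/

open scoped nonZeroDivisors

theorem exists_sum_add_mul_eq_sum_mul_prod_add {α ι : Type*} [IdemCommSemiring α] (c : α)
    (f : ι → α) (s : Finset ι) :
    ∃ y, (∑ i ∈ s, f i + c) * y = (∑ i ∈ s, f i) * ∏ i ∈ s, (f i + c) := by
  classical
  -- `y` collects the terms of `∏ (f i + c)` that involve some `f i`.
  suffices ∃ y, (∑ i ∈ s, f i + c) * y = (∑ i ∈ s, f i) * ∏ i ∈ s, (f i + c) ∧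
      ∏ i ∈ s, (f i + c) = y + c ^ s.card ∧ c ^ s.card * ∑ i ∈ s, f i ≤ c * y from
    this.imp fun _ => And.left
  induction s using Finset.induction_on with
  | empty => exact ⟨0, by simp⟩
  | insert a s ha ih =>
    obtain ⟨y, hmul, hprod, hle⟩ := ih
    set A := ∑ i ∈ s, f i
    set x := f a
    set n := s.card
    rw [Finset.sum_insert ha, Finset.prod_insert ha, Finset.card_insert_of_notMem ha, hprod]
    refine ⟨(x + c) * y + x * c ^ n, ?_, by ring, ?_⟩
    · have hxcy : x * (c * y) ≤ (x + A) * ((x + c) * (y + c ^ n)) := by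
        gcongr <;> first | exact le_self_add | exact le_add_self
      calc (x + A + c) * ((x + c) * y + x * c ^ n)
          = (x + c) * ((A + c) * y) + x * ((x + c) * y + x * c ^ n + c ^ (n + 1))
            + x * (c ^ n * A) := by ring
        _ = (x + A) * ((x + c) * (y + c ^ n)) + x * (c ^ n * A) := by
          rw [hmul, hprod]; ring
        _ = (x + A) * ((x + c) * (y + c ^ n)) :=
          add_eq_left_iff_le.2 (le_trans (by gcongr) hxcy)
    · calc c ^ (n + 1) * (x + A) = c * (c ^ n * A) + c * (x * c ^ n) := by ring
        _ ≤ c * (c * y) + c * (x * c ^ n) := by gcongr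
        _ ≤ c * (x * y) + c * (c * y) + c * (x * c ^ n) := by gcongr; exact le_add_self
        _ = c * ((x + c) * y + x * c ^ n) := by ring

theorem Ideal.span_finset_eq_sum {R : Type*} [Semiring R] (s : Finset R) :
    Ideal.span (s : Set R) = ∑ x ∈ s, Ideal.span {x} := by
  classical
  induction s using Finset.induction_on with
  | empty => simp
  | insert a s ha ih =>
    rw [Finset.coe_insert, Ideal.span_insert, Finset.sum_insert ha, ih, Ideal.add_eq_sup]

namespace FractionalIdeal

instance : NoZeroDivisors (FractionalIdeal D⁰ K) where
  eq_zero_or_eq_zero_of_mul_eq_zero {A B} h := by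
    have : (A : Submodule D K) * B = ⊥ := by rw [← coe_mul, h, coe_zero]
    simpa only [Submodule.mul_eq_bot, coeToSubmodule_eq_bot] using this

protected theorem one_div_ne_zero {A : FractionalIdeal D⁰ K} (hA : A ≠ 0) : 1 / A ≠ 0 := by
  obtain ⟨d, hd, hdA⟩ := A.isFractional
  intro h
  have hmem : algebraMap D K d ∈ 1 / A := by
    refine (mem_div_iff_of_ne_zero hA).2 fun y hy => ?_
    obtain ⟨r, hr⟩ := hdA y hy
    exact (mem_one_iff _).2 ⟨r, by rw [hr, Algebra.smul_def]⟩
  rw [h, mem_zero_iff] at hmem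
  exact IsFractionRing.to_map_ne_zero_of_mem_nonZeroDivisors hd hmem

theorem one_div_le_one_div_of_le {A B : FractionalIdeal D⁰ K} (hA : A ≠ 0) (h : A ≤ B) :
    1 / B ≤ 1 / A := by
  rw [le_div_iff_mul_le hA]
  calc 1 / B * A ≤ 1 / B * B := by gcongr
    _ ≤ 1 := by rw [mul_comm]; exact mul_one_div_le_one

theorem one_div_mul_mul_le_one_div {A B : FractionalIdeal D⁰ K} (hB : B ≠ 0) :
    1 / (A * B) * A ≤ 1 / B := by
  rw [le_div_iff_mul_le hB, mul_assoc, mul_comm]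
  exact mul_one_div_le_one

theorem coeIdeal_span_pair_ne_zero {R L : Type*} [CommRing R] [Field L] [Algebra R L]
    [IsFractionRing R L] {a : R} (ha : a ≠ 0) (b : R) :
    (Ideal.span {a, b} : FractionalIdeal R⁰ L) ≠ 0 :=
  coeIdeal_ne_zero.2 fun h => ha (Ideal.span_eq_bot.1 h a (by simp))

theorem mem_one_div_coeIdeal_span_pair {a : D} (b : D) (ha : a ≠ 0) {y : K} :
    y ∈ 1 / (Ideal.span {a, b} : FractionalIdeal D⁰ K) ↔
      y * algebraMap D K a ∈ (1 : FractionalIdeal D⁰ K) ∧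
        y * algebraMap D K b ∈ (1 : FractionalIdeal D⁰ K) := by
  rw [← spanSingleton_le_iff_mem, le_div_iff_mul_le (coeIdeal_span_pair_ne_zero ha b),
    Ideal.span_insert, coeIdeal_sup, coeIdeal_span_singleton, coeIdeal_span_singleton, mul_add,
    ← sup_eq_add, sup_le_iff, spanSingleton_mul_spanSingleton, spanSingleton_mul_spanSingleton,
    spanSingleton_le_iff_mem, spanSingleton_le_iff_mem]

theorem spanSingleton_mul_one_div_coeIdeal_span_pair {a : D} (b : D) (ha : a ≠ 0) :
    spanSingleton D⁰ (algebraMap D K a) * (1 / (Ideal.span {a, b} : FractionalIdeal D⁰ K)) =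
      ((Ideal.span {a}).colon (Ideal.span {b}) : Ideal D) := by
  have ha' : algebraMap D K a ≠ 0 := (map_ne_zero_iff _ (IsFractionRing.injective D K)).2 ha
  ext x
  simp only [mem_singleton_mul, mem_one_div_coeIdeal_span_pair b ha, mem_one_iff, mem_coeIdeal,
    Ideal.mem_colon_span_singleton, Ideal.mem_span_singleton']
  constructor
  · rintro ⟨y, ⟨⟨r, hr⟩, t, ht⟩, rfl⟩
    refine ⟨r, ⟨t, IsFractionRing.injective D K ?_⟩, by rw [hr, mul_comm]⟩
    simp only [map_mul, hr, ht]
    ring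
  · rintro ⟨r, ⟨t, ht⟩, rfl⟩
    refine ⟨algebraMap D K r / algebraMap D K a, ⟨⟨r, by field_simp⟩, t, ?_⟩, by field_simp⟩
    rw [div_mul_eq_mul_div, eq_div_iff ha', ← map_mul, ← map_mul, ht]

theorem coeIdeal_span_pair_mul_one_div {a b : D} (ha : a ≠ 0) (hb : b ≠ 0) :
    (Ideal.span {a, b} : FractionalIdeal D⁰ K) * (1 / (Ideal.span {a, b} : FractionalIdeal D⁰ K)) =
      ((Ideal.span {a}).colon (Ideal.span {b}) ⊔ (Ideal.span {b}).colon (Ideal.span {a}) :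
        Ideal D) := by
  rw [coeIdeal_sup, ← spanSingleton_mul_one_div_coeIdeal_span_pair b ha,
    ← spanSingleton_mul_one_div_coeIdeal_span_pair a hb, Set.pair_comm b a, ← add_mul,
    ← coeIdeal_span_singleton, ← coeIdeal_span_singleton, ← coeIdeal_sup, ← Ideal.span_insert]

end FractionalIdeal

theorem vop_zero : vop (0 : FractionalIdeal D⁰ K) = 0 := by
  simp [vop]

theorem vop_one : vop (1 : FractionalIdeal D⁰ K) = 1 := by
  simp [vop]

theorem vop_ne_zero {A : FractionalIdeal D⁰ K} (hA : A ≠ 0) : vop A ≠ 0 :=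
  FractionalIdeal.one_div_ne_zero (FractionalIdeal.one_div_ne_zero hA)

theorem vop_mono {A B : FractionalIdeal D⁰ K} (h : A ≤ B) : vop A ≤ vop B := by
  rcases eq_or_ne A 0 with rfl | hA
  · simp [vop_zero]
  have hB : B ≠ 0 := ne_bot_of_le_ne_bot hA h
  exact one_div_le_one_div_of_le (FractionalIdeal.one_div_ne_zero hB)
    (one_div_le_one_div_of_le hA h)

theorem vop_mul_vop_le (A B : FractionalIdeal D⁰ K) : vop (A * vop B) ≤ vop (A * B) := by
  rcases eq_or_ne (A * B) 0 with hAB | hAB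
  · rcases mul_eq_zero.1 hAB with rfl | rfl <;> simp [vop_zero]
  obtain ⟨hA, hB⟩ := mul_ne_zero_iff.1 hAB
  refine one_div_le_one_div_of_le (FractionalIdeal.one_div_ne_zero hAB) ?_
  rw [FractionalIdeal.le_div_iff_mul_le (mul_ne_zero hA (vop_ne_zero hB)), ← mul_assoc]
  calc 1 / (A * B) * A * vop B ≤ 1 / B * vop B := by
        gcongr; exact one_div_mul_mul_le_one_div hB
    _ ≤ 1 := mul_one_div_le_one

theorem IsVInvertible.ne_zero {A : FractionalIdeal D⁰ K} (h : IsVInvertible A) : A ≠ 0 := by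
  rintro rfl
  simp [IsVInvertible, vop_zero] at h

theorem isVInvertible_iff_one_le {A : FractionalIdeal D⁰ K} :
    IsVInvertible A ↔ 1 ≤ vop (A * (1 / A)) :=
  ⟨ge_of_eq, fun h => le_antisymm ((vop_mono mul_one_div_le_one).trans vop_one.le) h⟩

theorem IsVInvertible.mul {A B : FractionalIdeal D⁰ K} (hA : IsVInvertible A)
    (hB : IsVInvertible B) : IsVInvertible (A * B) := by
  have hAB : A * B ≠ 0 := mul_ne_zero hA.ne_zero hB.ne_zero
  refine isVInvertible_iff_one_le.2 ?_
  calc (1 : FractionalIdeal D⁰ K) = vop (A * (1 / A) * vop (B * (1 / B))) := by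
        rw [hB, mul_one, hA]
    _ ≤ vop (A * (1 / A) * (B * (1 / B))) := vop_mul_vop_le _ _
    _ ≤ vop (A * B * (1 / (A * B))) := by
      refine vop_mono ?_
      rw [mul_mul_mul_comm]
      gcongr
      rw [le_div_iff_mul_le hAB]
      calc 1 / A * (1 / B) * (A * B) = A * (1 / A) * (B * (1 / B)) := by ring
        _ ≤ 1 * 1 := by gcongr <;> exact mul_one_div_le_one
        _ = 1 := mul_one 1

theorem IsVInvertible.of_mul_left {A B : FractionalIdeal D⁰ K} (h : IsVInvertible (A * B)) :
    IsVInvertible A := by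
  refine isVInvertible_iff_one_le.2 (h.symm.le.trans (vop_mono ?_))
  have hA : A ≠ 0 := left_ne_zero_of_mul h.ne_zero
  calc A * B * (1 / (A * B)) = A * (1 / (A * B) * B) := by ring
    _ ≤ A * (1 / A) := by gcongr; rw [mul_comm A B]; exact one_div_mul_mul_le_one_div hA

theorem isVInvertible_one : IsVInvertible (1 : FractionalIdeal D⁰ K) := by
  simp [IsVInvertible, vop_one]

theorem isVInvertible_spanSingleton {z : K} (hz : z ≠ 0) :
    IsVInvertible (spanSingleton D⁰ z) := by
  rw [IsVInvertible, one_div_spanSingleton, spanSingleton_mul_spanSingleton,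
    mul_inv_cancel₀ hz, spanSingleton_one, vop_one]

theorem isVInvertible_coeIdeal_span_singleton {a : D} (ha : a ≠ 0) :
    IsVInvertible (Ideal.span {a} : FractionalIdeal D⁰ K) := by
  rw [coeIdeal_span_singleton]
  exact isVInvertible_spanSingleton ((map_ne_zero_iff _ (IsFractionRing.injective D K)).2 ha)

theorem isVInvertible_coeIdeal_of_fg
    (hpair : ∀ a b : D, a ≠ 0 → IsVInvertible (Ideal.span {a, b} : FractionalIdeal D⁰ K))
    {I : Ideal D} (hI : I.FG) (h0 : I ≠ ⊥) : IsVInvertible (I : FractionalIdeal D⁰ K) := by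
  classical
  obtain ⟨s, rfl⟩ := hI
  induction s using Finset.induction_on with
  | empty => simp at h0
  | insert c s hc ih =>
    rw [Finset.coe_insert] at h0 ⊢
    rcases eq_or_ne c 0 with rfl | hc0
    · rw [Ideal.span_insert_zero] at h0 ⊢
      exact ih h0
    rw [Ideal.span_insert, sup_comm]
    rcases eq_or_ne (Ideal.span (s : Set D)) ⊥ with hs | hs
    · rw [hs, bot_sup_eq]
      exact isVInvertible_coeIdeal_span_singleton hc0
    obtain ⟨Y, hY⟩ :=
      exists_sum_add_mul_eq_sum_mul_prod_add (Ideal.span {c}) (fun x => Ideal.span {x}) s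
    rw [← Ideal.span_finset_eq_sum] at hY
    refine IsVInvertible.of_mul_left (B := (Y : FractionalIdeal D⁰ K)) ?_
    rw [← Ideal.add_eq_sup, ← coeIdeal_mul, hY, ← coeIdealHom_apply, map_mul, map_prod]
    refine (ih hs).mul (Finset.prod_induction _ _ (fun _ _ => IsVInvertible.mul)
      isVInvertible_one fun x _ => ?_)
    rw [coeIdealHom_apply, Ideal.add_eq_sup, ← Ideal.span_insert, Set.pair_comm]
    exact hpair c x hc0

theorem isVInvertible_of_fg
    (hpair : ∀ a b : D, a ≠ 0 → IsVInvertible (Ideal.span {a, b} : FractionalIdeal D⁰ K))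
    {F : FractionalIdeal D⁰ K} (hF : F ≠ 0) (hFG : (F : Submodule D K).FG) :
    IsVInvertible F := by
  obtain ⟨d, I, hd, rfl⟩ := exists_eq_spanSingleton_mul F
  have hd' : algebraMap D K d ≠ 0 := (map_ne_zero_iff _ (IsFractionRing.injective D K)).2 hd
  have hI : (I : FractionalIdeal D⁰ K) = spanSingleton _ (algebraMap D K d) *
      (spanSingleton _ (algebraMap D K d)⁻¹ * (I : FractionalIdeal D⁰ K)) := by
    rw [← mul_assoc, spanSingleton_mul_spanSingleton, mul_inv_cancel₀ hd', spanSingleton_one,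
      one_mul]
  refine (isVInvertible_spanSingleton (inv_ne_zero hd')).mul
    (isVInvertible_coeIdeal_of_fg hpair ?_ ?_)
  · rw [← coeIdeal_fg _ (IsFractionRing.injective D K), hI, coe_mul, coe_spanSingleton]
    exact (Submodule.fg_span_singleton _).mul hFG
  · rintro rfl
    simp at hF

/-- `D` is a `v`-domain iff `(((a) :_D (b)) + ((b) :_D (a)))^v = D` for all nonzero
`a, b ∈ D`. -/
theorem vDomain_iff_colon_sum :
    (∀ F : FractionalIdeal (nonZeroDivisors D) K, F ≠ 0 → (F : Submodule D K).FG →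
        IsVInvertible F) ↔
      ∀ a b : D, a ≠ 0 → b ≠ 0 →
        vop (((Submodule.colon (Ideal.span {a}) (Ideal.span {b}) ⊔
          Submodule.colon (Ideal.span {b}) (Ideal.span {a}) : Ideal D)) :
            FractionalIdeal (nonZeroDivisors D) K) = 1 := by
  constructor
  · intro H a b ha hb
    rw [← coeIdeal_span_pair_mul_one_div ha hb]
    exact H _ (coeIdeal_span_pair_ne_zero ha b)
      ((coeIdeal_fg _ (IsFractionRing.injective D K) _).2 (Submodule.fg_span (Set.toFinite _)))
  · intro H F hF hFG
    refine isVInvertible_of_fg (fun a b ha => ?_) hF hFG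
    rcases eq_or_ne b 0 with rfl | hb
    · rw [Ideal.span_pair_zero]
      exact isVInvertible_coeIdeal_span_singleton ha
    · rw [IsVInvertible, coeIdeal_span_pair_mul_one_div ha hb]
      exact H a b ha hb
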